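/- For every p ∈ ℕ₀ and every n ∈ ℕ, one has H_n(−p, 1, 1) = (1/2)·H_n(−p)·(H_n^2 − H_n(2)) − C^{(p)}_0(n)·H_n + C^{(p)}_{0,0}(n). -/

import Mathlib

open Finset Polynomial


/-- Extended multiple harmonic sum `H_n(k_1,…,k_r) = ∑_{n ≥ n_1 > ⋯ > n_r ≥ 1} 1/(n_1^{k_1} ⋯ n_r^{k_r})`,
with `H_n(∅) = 1`; the exponents may be arbitrary integers.  In particular `Hs n [-(p:ℤ)] = ∑_{m=1}^n m^p`
and `Hs n [1]` is the `n`-th harmonic number. -/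
def Hs : ℕ → List ℤ → ℚ
  | _, [] => 1
  | n, k :: ks => ∑ m ∈ Finset.Icc 1 n, ((m : ℚ) ^ k)⁻¹ * Hs (m - 1) ks

/-- The polynomial `C^{(p)}_{a_2,…,a_r}(x)`, where the list `a = [a_1, a_2, …, a_r]` is the *full*
subscript list including the leading `a_1 = 0` (so `Cpoly p [0]` is `C^{(p)}`, `Cpoly p [0,0]`
is `C^{(p)}_0`, `Cpoly p [0,1,2]` is `C^{(p)}_{1,2}`, …):
`C^{(p)}_{a_2,…,a_r}(x) = ∑_{j_1,…,j_r ≥ 0, j_1+⋯+j_r ≤ p-a_r}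
  (∏_{i=1}^r binom(p+1-a_i-j_1-⋯-j_{i-1}, j_i) B_{j_i} / (p+1-a_i-j_1-⋯-j_{i-1}))
    x^{p+1-a_r-j_1-⋯-j_r}`,
the zero polynomial if `p < a_r`, with `B_j = bernoulli' j`. -/
noncomputable def Cpoly (p : ℕ) (a : List ℕ) : Polynomial ℚ :=
  ∑ j ∈ Fintype.piFinset (fun _ : Fin a.length => Finset.range (p + 1)),
    if (∑ i, j i) + a.getLastD 0 ≤ p then
      Polynomial.C (∏ i : Fin a.length,
        ((p + 1 - a.get i - ∑ i' ∈ Finset.Iio i, j i').choose (j i) : ℚ) * bernoulli' (j i) /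
          ((p + 1 - a.get i - ∑ i' ∈ Finset.Iio i, j i' : ℕ) : ℚ)) *
        Polynomial.X ^ (p + 1 - a.getLastD 0 - ∑ i, j i)
    else 0

lemma Cpoly_one_def (p : ℕ) :
    Cpoly p [0] = ∑ j ∈ Fintype.piFinset (fun _ : Fin 1 => Finset.range (p + 1)),
    if (∑ i, j i) + ([0]:List ℕ).getLastD 0 ≤ p then
      Polynomial.C (∏ i : Fin 1,
        ((p + 1 - ([0]:List ℕ).get i - ∑ i' ∈ Finset.Iio i, j i').choose (j i) : ℚ) * bernoulli' (j i) /
          ((p + 1 - ([0]:List ℕ).get i - ∑ i' ∈ Finset.Iio i, j i' : ℕ) : ℚ)) *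
        Polynomial.X ^ (p + 1 - ([0]:List ℕ).getLastD 0 - ∑ i, j i)
    else 0 := rfl

lemma Cpoly_two_def (p : ℕ) (a b : ℕ) :
    Cpoly p [a, b] = ∑ j ∈ Fintype.piFinset (fun _ : Fin 2 => Finset.range (p + 1)),
    if (∑ i, j i) + ([a,b]:List ℕ).getLastD 0 ≤ p then
      Polynomial.C (∏ i : Fin 2,
        ((p + 1 - ([a,b]:List ℕ).get i - ∑ i' ∈ Finset.Iio i, j i').choose (j i) : ℚ) * bernoulli' (j i) /
          ((p + 1 - ([a,b]:List ℕ).get i - ∑ i' ∈ Finset.Iio i, j i' : ℕ) : ℚ)) *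
        Polynomial.X ^ (p + 1 - ([a,b]:List ℕ).getLastD 0 - ∑ i, j i)
    else 0 := rfl

lemma Cpoly_three_def (p : ℕ) (a b c : ℕ) :
    Cpoly p [a, b, c] = ∑ j ∈ Fintype.piFinset (fun _ : Fin 3 => Finset.range (p + 1)),
    if (∑ i, j i) + ([a,b,c]:List ℕ).getLastD 0 ≤ p then
      Polynomial.C (∏ i : Fin 3,
        ((p + 1 - ([a,b,c]:List ℕ).get i - ∑ i' ∈ Finset.Iio i, j i').choose (j i) : ℚ) * bernoulli' (j i) /
          ((p + 1 - ([a,b,c]:List ℕ).get i - ∑ i' ∈ Finset.Iio i, j i' : ℕ) : ℚ)) *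
        Polynomial.X ^ (p + 1 - ([a,b,c]:List ℕ).getLastD 0 - ∑ i, j i)
    else 0 := rfl

lemma sum_piFinset_one {M : Type*} [AddCommMonoid M] (s : Finset ℕ) (f : (Fin 1 → ℕ) → M) :
    ∑ j ∈ Fintype.piFinset (fun _ : Fin 1 => s), f j = ∑ x ∈ s, f (fun _ => x) := by
  refine Finset.sum_nbij' (fun j => j 0) (fun x => fun _ => x) ?_ ?_ ?_ ?_ ?_
  · intro a ha; exact (Fintype.mem_piFinset.1 ha) 0
  · intro x hx; exact Fintype.mem_piFinset.2 (fun _ => hx)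
  · intro a ha; funext i; fin_cases i; rfl
  · intro x hx; rfl
  · intro a ha; congr 1; funext i; fin_cases i; rfl

lemma sum_piFinset_two {M : Type*} [AddCommMonoid M] (s : Finset ℕ) (f : (Fin 2 → ℕ) → M) :
    ∑ j ∈ Fintype.piFinset (fun _ : Fin 2 => s), f j = ∑ x ∈ s, ∑ y ∈ s, f ![x, y] := by
  rw [← Finset.sum_product']
  refine Finset.sum_nbij' (fun j => (j 0, j 1)) (fun q => ![q.1, q.2]) ?_ ?_ ?_ ?_ ?_
  · intro a ha; exact Finset.mem_product.2 ⟨(Fintype.mem_piFinset.1 ha) 0, (Fintype.mem_piFinset.1 ha) 1⟩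
  · intro q hq
    have h := Finset.mem_product.1 hq
    refine Fintype.mem_piFinset.2 (fun i => ?_)
    fin_cases i
    · exact h.1
    · exact h.2
  · intro a ha; funext i; fin_cases i <;> rfl
  · intro q hq; rfl
  · intro a ha; congr 1; funext i; fin_cases i <;> rfl

lemma sum_piFinset_three {M : Type*} [AddCommMonoid M] (s : Finset ℕ) (f : (Fin 3 → ℕ) → M) :
    ∑ j ∈ Fintype.piFinset (fun _ : Fin 3 => s), f j = ∑ x ∈ s, ∑ y ∈ s, ∑ z ∈ s, f ![x, y, z] := by
  rw [← Finset.sum_product', ← Finset.sum_product']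
  refine Finset.sum_nbij' (fun j => ((j 0, j 1), j 2)) (fun q => ![q.1.1, q.1.2, q.2]) ?_ ?_ ?_ ?_ ?_
  · intro a ha
    exact Finset.mem_product.2 ⟨Finset.mem_product.2 ⟨(Fintype.mem_piFinset.1 ha) 0, (Fintype.mem_piFinset.1 ha) 1⟩, (Fintype.mem_piFinset.1 ha) 2⟩
  · intro q hq
    have h := Finset.mem_product.1 hq
    have h1 := Finset.mem_product.1 h.1
    refine Fintype.mem_piFinset.2 (fun i => ?_)
    fin_cases i
    · exact h1.1
    · exact h1.2
    · exact h.2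
  · intro a ha; funext i; fin_cases i <;> rfl
  · intro q hq; rfl
  · intro a ha; congr 1; funext i; fin_cases i <;> rfl


noncomputable def cc (p j : ℕ) : ℚ := ((p+1).choose j : ℚ) * bernoulli' j / ((p+1 : ℕ) : ℚ)

lemma Cpoly_one (p : ℕ) :
    Cpoly p [0] = ∑ j ∈ range (p+1), C (cc p j) * X ^ (p+1-j) := by
  rw [Cpoly_one_def, sum_piFinset_one]
  refine Finset.sum_congr rfl (fun x hx => ?_)
  have hle : x ≤ p := by simpa [Nat.lt_succ_iff] using hx
  simp [cc, hle]

lemma Cpoly_two (p : ℕ) :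
    Cpoly p [0,0] = ∑ j ∈ range (p+1), C (cc p j) * Cpoly (p-j) [0] := by
  rw [Cpoly_two_def, sum_piFinset_two]
  refine Finset.sum_congr rfl (fun x hx => ?_)
  have hxle : x ≤ p := by simpa [Nat.lt_succ_iff] using hx
  rw [Cpoly_one, Finset.mul_sum]
  rw [← Finset.sum_subset (Finset.range_subset_range.2 (by omega : p - x + 1 ≤ p + 1))
      (f := fun y => if (∑ i, (![x, y] : Fin 2 → ℕ) i) + ([0,0]:List ℕ).getLastD 0 ≤ p then
      C (∏ i : Fin 2,
        ((p + 1 - ([0,0]:List ℕ).get i - ∑ i' ∈ Finset.Iio i, (![x, y] : Fin 2 → ℕ) i').choose ((![x, y] : Fin 2 → ℕ) i) : ℚ) * bernoulli' ((![x, y] : Fin 2 → ℕ) i) /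
          ((p + 1 - ([0,0]:List ℕ).get i - ∑ i' ∈ Finset.Iio i, (![x, y] : Fin 2 → ℕ) i' : ℕ) : ℚ)) *
        X ^ (p + 1 - ([0,0]:List ℕ).getLastD 0 - ∑ i, (![x, y] : Fin 2 → ℕ) i)
    else 0)
      (fun y _ hy => by
        rw [if_neg]
        simp only [Fin.sum_univ_two, Matrix.cons_val_zero, Matrix.cons_val_one, Matrix.head_cons,
          List.getLastD]
        simp only [Finset.mem_range] at hy
        omega)]
  refine Finset.sum_congr rfl (fun y hy => ?_)
  have hyle : y ≤ p - x := by simpa [Nat.lt_succ_iff] using hy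
  have hcond : x + y + 0 ≤ p := by omega
  have e1 : p + 1 - x = p - x + 1 := by omega
  have e2 : p + 1 - (x + y) = p - x + 1 - y := by omega
  have hif : x + y + ([0,0]:List ℕ).getLastD 0 ≤ p := by simpa using hcond
  simp only [Fin.sum_univ_two, Matrix.cons_val_zero, Matrix.cons_val_one, Matrix.head_cons]
  rw [if_pos hif]
  have hg : ∀ i : Fin ([0,0]:List ℕ).length, ([0,0]:List ℕ).get i = 0 := by
    intro i; fin_cases i <;> rfl
  have i0 : (Finset.Iio (0 : Fin 2)) = ∅ := by decide
  have i1 : (Finset.Iio (1 : Fin 2)) = {0} := by decide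
  simp only [Fin.prod_univ_two, cc, i0, i1, Finset.sum_empty, Finset.sum_singleton,
    Matrix.cons_val_zero, Matrix.cons_val_one, Matrix.head_cons, Nat.sub_zero,
    hg, show ([0,0]:List ℕ).getLastD 0 = 0 from rfl, e1, e2]
  rw [← mul_assoc, ← C_mul]


lemma extend_double {M : Type*} [AddCommMonoid M] {q p : ℕ} (h : q ≤ p) (f : ℕ → ℕ → M)
    (hf : ∀ y z, ¬(y + z ≤ q) → f y z = 0) :
    ∑ y ∈ range (q+1), ∑ z ∈ range (q+1), f y z
      = ∑ y ∈ range (p+1), ∑ z ∈ range (p+1), f y z := by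
  have h1 : ∀ y, ∑ z ∈ range (q+1), f y z = ∑ z ∈ range (p+1), f y z := by
    intro y
    refine Finset.sum_subset (Finset.range_subset_range.2 (by omega)) (fun z _ hz => ?_)
    exact hf y z (by simp only [Finset.mem_range] at hz; omega)
  simp_rw [h1]
  refine Finset.sum_subset (Finset.range_subset_range.2 (by omega)) (fun y _ hy => ?_)
  refine Finset.sum_eq_zero (fun z _ => ?_)
  exact hf y z (by simp only [Finset.mem_range] at hy; omega)

lemma Cpoly_three (p : ℕ) :
    Cpoly p [0,0,0] = ∑ j ∈ range (p+1), C (cc p j) * Cpoly (p-j) [0,0] := by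
  rw [Cpoly_three_def, sum_piFinset_three]
  refine Finset.sum_congr rfl (fun x hx => ?_)
  have hxle : x ≤ p := by simpa [Nat.lt_succ_iff] using hx
  rw [Cpoly_two_def, sum_piFinset_two]
  rw [extend_double (show p - x ≤ p by omega) _ (fun y z hyz => by
    rw [if_neg]
    simp only [Fin.sum_univ_two, Matrix.cons_val_zero, Matrix.cons_val_one, Matrix.head_cons,
      List.getLastD]
    omega)]
  rw [Finset.mul_sum]
  refine Finset.sum_congr rfl (fun y hy => ?_)
  rw [Finset.mul_sum]
  refine Finset.sum_congr rfl (fun z hz => ?_)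
  have hg3 : ∀ i : Fin ([0,0,0]:List ℕ).length, ([0,0,0]:List ℕ).get i = 0 := by
    intro i; fin_cases i <;> rfl
  have hg2 : ∀ i : Fin ([0,0]:List ℕ).length, ([0,0]:List ℕ).get i = 0 := by
    intro i; fin_cases i <;> rfl
  have i30 : (Finset.Iio (0 : Fin 3)) = ∅ := by decide
  have i31 : (Finset.Iio (1 : Fin 3)) = {0} := by decide
  have i32 : (Finset.Iio (2 : Fin 3)) = {0, 1} := by decide
  have i20 : (Finset.Iio (0 : Fin 2)) = ∅ := by decide
  have i21 : (Finset.Iio (1 : Fin 2)) = {0} := by decide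
  simp only [Fin.sum_univ_three, Fin.sum_univ_two, Matrix.cons_val_zero, Matrix.cons_val_one,
    Matrix.head_cons, Matrix.cons_val_two, Matrix.tail_cons,
    show ([0,0,0]:List ℕ).getLastD 0 = 0 from rfl,
    show ([0,0]:List ℕ).getLastD 0 = 0 from rfl]
  by_cases hc : y + z ≤ p - x
  · rw [if_pos (by omega), if_pos (by omega)]
    have e1 : p + 1 - x = p - x + 1 := by omega
    have e2 : p + 1 - (x + y) = p - x + 1 - y := by omega
    have e3 : p + 1 - (x + y + z) = p - x + 1 - (y + z) := by omega
    simp only [Fin.prod_univ_three, Fin.prod_univ_two, cc, i30, i31, i32, i20, i21,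
      Finset.sum_empty, Finset.sum_singleton, Finset.sum_insert (by decide : (0:Fin 3) ∉ ({1} : Finset (Fin 3))),
      Matrix.cons_val_zero, Matrix.cons_val_one, Matrix.head_cons, Matrix.cons_val_two,
      Matrix.tail_cons, Nat.sub_zero, hg3, hg2, e1, e2, e3]
    rw [← mul_assoc (C _), ← C_mul]
    congr 2
    ring
  · rw [if_neg (by omega), if_neg (by omega), mul_zero]

lemma Hs_succ (n : ℕ) (k : ℤ) (ks : List ℤ) :
    Hs (n+1) (k::ks) = Hs n (k::ks) + (((n:ℚ)+1) ^ k)⁻¹ * Hs n ks := by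
  show (∑ m ∈ Finset.Icc 1 (n+1), ((m : ℚ) ^ k)⁻¹ * Hs (m - 1) ks) = _
  rw [Finset.sum_Icc_succ_top (by omega)]
  push_cast
  rfl

lemma Hs_nil (n : ℕ) : Hs n [] = 1 := rfl

lemma Hs_negpow (q n : ℕ) : Hs n [-(q:ℤ)] = ∑ m ∈ Finset.Icc 1 n, (m:ℚ)^q := by
  show (∑ m ∈ Finset.Icc 1 n, ((m : ℚ) ^ (-(q:ℤ)))⁻¹ * Hs (m - 1) []) = _
  refine Finset.sum_congr rfl (fun m hm => ?_)
  rw [Hs_nil, mul_one, zpow_neg, inv_inv, zpow_natCast]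

lemma eval_Cpoly_one (q n : ℕ) : (Cpoly q [0]).eval (n:ℚ) = ∑ m ∈ Finset.Icc 1 n, (m:ℚ)^q := by
  rw [Cpoly_one, Polynomial.eval_finset_sum, ← Finset.Ico_add_one_right_eq_Icc, sum_Ico_pow]
  refine Finset.sum_congr rfl (fun j hj => ?_)
  simp only [Polynomial.eval_mul, Polynomial.eval_C, Polynomial.eval_pow, Polynomial.eval_X, cc]
  push_cast
  ring

lemma key (p m : ℕ) (hm : 1 ≤ m) :
    ∑ j ∈ range (p+1), cc p j * (m:ℚ)^(p-j) = ((m:ℚ))⁻¹ * Hs m [-(p:ℤ)] := by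
  have hm0 : (m:ℚ) ≠ 0 := by positivity
  have h1 : Hs m [-(p:ℤ)] = (Cpoly p [0]).eval (m:ℚ) := by
    rw [Hs_negpow, eval_Cpoly_one]
  rw [h1, Cpoly_one, Polynomial.eval_finset_sum]
  rw [eq_comm, inv_mul_eq_iff_eq_mul₀ hm0, Finset.mul_sum]
  refine Finset.sum_congr rfl (fun j hj => ?_)
  have hjle : j ≤ p := by simpa [Nat.lt_succ_iff] using hj
  simp only [Polynomial.eval_mul, Polynomial.eval_C, Polynomial.eval_pow, Polynomial.eval_X]
  rw [show p + 1 - j = (p - j) + 1 by omega, pow_succ]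
  ring

lemma eval_C0 (p n : ℕ) :
    (Cpoly p [0,0]).eval (n:ℚ) = ∑ m ∈ Finset.Icc 1 n, ((m:ℚ))⁻¹ * Hs m [-(p:ℤ)] := by
  rw [Cpoly_two, Polynomial.eval_finset_sum]
  have : ∀ j ∈ range (p+1), (Polynomial.C (cc p j) * Cpoly (p-j) [0]).eval (n:ℚ)
      = ∑ m ∈ Finset.Icc 1 n, cc p j * (m:ℚ)^(p-j) := by
    intro j hj
    rw [Polynomial.eval_mul, Polynomial.eval_C, eval_Cpoly_one, Finset.mul_sum]
  rw [Finset.sum_congr rfl this, Finset.sum_comm]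
  refine Finset.sum_congr rfl (fun m hm => ?_)
  exact key p m (Finset.mem_Icc.1 hm).1

lemma eval_C00 (p n : ℕ) :
    (Cpoly p [0,0,0]).eval (n:ℚ) = ∑ m ∈ Finset.Icc 1 n, ((m:ℚ))⁻¹ *
      ∑ k ∈ Finset.Icc 1 m, ((k:ℚ))⁻¹ * Hs k [-(p:ℤ)] := by
  rw [Cpoly_three, Polynomial.eval_finset_sum]
  have h1 : ∀ j ∈ range (p+1), (Polynomial.C (cc p j) * Cpoly (p-j) [0,0]).eval (n:ℚ)
      = ∑ m ∈ Finset.Icc 1 n, ((m:ℚ))⁻¹ * (cc p j * Hs m [-((p-j:ℕ):ℤ)]) := by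
    intro j hj
    rw [Polynomial.eval_mul, Polynomial.eval_C, eval_C0, Finset.mul_sum]
    exact Finset.sum_congr rfl (fun m hm => by ring)
  rw [Finset.sum_congr rfl h1, Finset.sum_comm]
  refine Finset.sum_congr rfl (fun m hm => ?_)
  rw [← Finset.mul_sum]
  congr 1
  have h2 : ∀ j ∈ range (p+1), cc p j * Hs m [-((p-j:ℕ):ℤ)]
      = ∑ k ∈ Finset.Icc 1 m, cc p j * (k:ℚ)^(p-j) := by
    intro j hj
    rw [Hs_negpow, Finset.mul_sum]
  rw [Finset.sum_congr rfl h2, Finset.sum_comm]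
  exact Finset.sum_congr rfl (fun k hk => key p k (Finset.mem_Icc.1 hk).1)

lemma Hs11 (n : ℕ) : Hs n [1,1] = 1/2 * ((Hs n [1])^2 - Hs n [2]) := by
  induction n with
  | zero => show Hs 0 [1,1] = _; simp [Hs]
  | succ n ih =>
    have h1 : Hs (n+1) [1] = Hs n [1] + ((n:ℚ)+1)⁻¹ := by
      rw [Hs_succ, Hs_nil, zpow_one, mul_one]
    have h2 : Hs (n+1) [2] = Hs n [2] + (((n:ℚ)+1)^2)⁻¹ := by
      rw [Hs_succ, Hs_nil, mul_one, show ((2:ℤ)) = ((2:ℕ):ℤ) from rfl, zpow_natCast]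
    have h3 : Hs (n+1) [1,1] = Hs n [1,1] + ((n:ℚ)+1)⁻¹ * Hs n [1] := by
      rw [Hs_succ, zpow_one]
    have hx : ((n:ℚ)+1) ≠ 0 := by positivity
    rw [h1, h2, h3, ih]
    field_simp
    ring

lemma main_sum (p n : ℕ) :
    Hs n [-(p:ℤ), 1, 1] =
      1/2 * Hs n [-(p:ℤ)] * ((Hs n [1])^2 - Hs n [2])
        - (∑ m ∈ Finset.Icc 1 n, ((m:ℚ))⁻¹ * Hs m [-(p:ℤ)]) * Hs n [1]
        + ∑ m ∈ Finset.Icc 1 n, ((m:ℚ))⁻¹ * ∑ k ∈ Finset.Icc 1 m, ((k:ℚ))⁻¹ * Hs k [-(p:ℤ)] := by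
  induction n with
  | zero => simp [Hs]
  | succ n ih =>
    have hx : ((n:ℚ)+1) ≠ 0 := by positivity
    have hpow : ((((n:ℚ)+1)) ^ (-(p:ℤ)))⁻¹ = ((n:ℚ)+1)^p := by
      rw [zpow_neg, inv_inv, zpow_natCast]
    have hL : Hs (n+1) [-(p:ℤ),1,1] = Hs n [-(p:ℤ),1,1] + ((n:ℚ)+1)^p * Hs n [1,1] := by
      rw [Hs_succ, hpow]
    have hA : Hs (n+1) [-(p:ℤ)] = Hs n [-(p:ℤ)] + ((n:ℚ)+1)^p := by
      rw [Hs_succ, hpow, Hs_nil, mul_one]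
    have h1 : Hs (n+1) [1] = Hs n [1] + ((n:ℚ)+1)⁻¹ := by
      rw [Hs_succ, Hs_nil, zpow_one, mul_one]
    have h2 : Hs (n+1) [2] = Hs n [2] + (((n:ℚ)+1)^2)⁻¹ := by
      rw [Hs_succ, Hs_nil, mul_one, show ((2:ℤ)) = ((2:ℕ):ℤ) from rfl, zpow_natCast]
    have hB : ∑ m ∈ Finset.Icc 1 (n+1), ((m:ℚ))⁻¹ * Hs m [-(p:ℤ)]
        = (∑ m ∈ Finset.Icc 1 n, ((m:ℚ))⁻¹ * Hs m [-(p:ℤ)])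
          + ((n:ℚ)+1)⁻¹ * Hs (n+1) [-(p:ℤ)] := by
      rw [Finset.sum_Icc_succ_top (by omega)]; push_cast; ring
    have hD : ∑ m ∈ Finset.Icc 1 (n+1), ((m:ℚ))⁻¹ * ∑ k ∈ Finset.Icc 1 m, ((k:ℚ))⁻¹ * Hs k [-(p:ℤ)]
        = (∑ m ∈ Finset.Icc 1 n, ((m:ℚ))⁻¹ * ∑ k ∈ Finset.Icc 1 m, ((k:ℚ))⁻¹ * Hs k [-(p:ℤ)])
          + ((n:ℚ)+1)⁻¹ * ∑ k ∈ Finset.Icc 1 (n+1), ((k:ℚ))⁻¹ * Hs k [-(p:ℤ)] := by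
      rw [Finset.sum_Icc_succ_top (by omega)]; push_cast; ring
    rw [hL, hA, h1, h2, hB, hD, Hs11, ih, hB, hA]
    field_simp
    ring

/-- `H_n(−p,1,1) = ½·H_n(−p)·(H_n² − H_n(2)) − C^{(p)}_0(n)·H_n + C^{(p)}_{0,0}(n)`. -/
theorem stmt_4 (p : ℕ) (n : ℕ) (hn : 0 < n) :
    Hs n [-(p : ℤ), 1, 1] =
      (1 / 2 : ℚ) * Hs n [-(p : ℤ)] * ((Hs n [1]) ^ 2 - Hs n [2])
        - (Cpoly p [0, 0]).eval (n : ℚ) * Hs n [1] + (Cpoly p [0, 0, 0]).eval (n : ℚ) := by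
  rw [eval_C0, eval_C00]
  exact main_sum p n
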